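/- For β = 1 and h = 0, let 𝖶_n be a real random variable with Lebesgue density proportional to exp( −(√n/2)·w² + n·log cosh(n^{−1/4}·w) ), and let 𝖶 have density f_𝖶(w) = (√2 / (3^{1/4} Γ(1/4))) · exp(−w⁴/12). Then there exists C > 0 such that for all n ≥ 2, d_TV(𝖶_n, 𝖶) ≤ C·(log n)³·n^{−1/2}. -/

import Mathlib

/-!
With `t = n^{-1/4} w` the unnormalized weight of `𝖶_n` is `exp (n (log cosh t - t²/2))`, and
`n t⁴ = w⁴`. The Taylor bounds `t²/2 - t⁴/12 ≤ log cosh t ≤ t²/2 - t⁴/12 + t⁶/45` (the upper one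
for `|t| ≤ 1`), obtained by integrating successively sharper bounds on `tanh = (log cosh)'`, show
that this weight dominates `exp (-w⁴/12)` and exceeds it by at most `w⁶/√n` times a Gaussian
envelope; for `|t| ≥ 1` the weight itself is that small. Hence the normalizing constants differ by
`O(n^{-1/2})`. When one unnormalized density dominates another, the two normalized laws differ on
every set by at most the relative gap of the normalizing constants, so the total variation
distance is `O(n^{-1/2})`, which is even stronger than `(log n)³ n^{-1/2}`.
-/

open MeasureTheory Real

/-- Density `f_𝖶(w) = (√2 / (3^{1/4} Γ(1/4))) exp(−w⁴/12)` of the critical limit law. -/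
noncomputable def quarticDensity (w : ℝ) : ℝ :=
  (Real.sqrt 2 / ((3 : ℝ) ^ ((1 : ℝ) / 4) * Real.Gamma (1 / 4))) * Real.exp (-w ^ 4 / 12)

/-- Law of the critical limit random variable `𝖶`. -/
noncomputable def quarticMeasure : Measure ℝ :=
  volume.withDensity fun w => ENNReal.ofReal (quarticDensity w)

/-- Normalized density of `𝖶_n = n^{-1/4} U_n`, proportional to
`exp(−(√n/2) w² + n log cosh(n^{-1/4} w))` (critical Curie–Weiss, β = 1, h = 0). -/
noncomputable def Wndensity (n : ℕ) (w : ℝ) : ℝ :=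
  Real.exp (-(Real.sqrt n / 2) * w ^ 2 +
      n * Real.log (Real.cosh ((n : ℝ) ^ (-(1 : ℝ) / 4) * w))) /
    ∫ u : ℝ, Real.exp (-(Real.sqrt n / 2) * u ^ 2 +
      n * Real.log (Real.cosh ((n : ℝ) ^ (-(1 : ℝ) / 4) * u)))

open Set

theorem image_le_of_hasDerivAt_le {f g f' g' : ℝ → ℝ} {a b : ℝ}
    (hf : ∀ x, HasDerivAt f (f' x) x) (hg : ∀ x, HasDerivAt g (g' x) x) (ha : f a ≤ g a)
    (hderiv : ∀ x ∈ Ico a b, f' x ≤ g' x) : ∀ x ∈ Icc a b, f x ≤ g x :=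
  image_le_of_deriv_right_le_deriv_boundary (fun x _ ↦ (hf x).continuousAt.continuousWithinAt)
    (fun x _ ↦ (hf x).hasDerivWithinAt) ha (fun x _ ↦ (hg x).continuousAt.continuousWithinAt)
    (fun x _ ↦ (hg x).hasDerivWithinAt) hderiv

namespace Real

theorem hasDerivAt_tanh (x : ℝ) : HasDerivAt tanh (1 - tanh x ^ 2) x := by
  have h := (hasDerivAt_sinh x).div (hasDerivAt_cosh x) (cosh_pos x).ne'
  rw [show tanh = sinh / cosh from funext tanh_eq_sinh_div_cosh]
  refine h.congr_deriv ?_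
  simp only [Pi.div_apply]
  field_simp

theorem hasDerivAt_log_cosh (x : ℝ) : HasDerivAt (fun y ↦ log (cosh y)) (tanh x) x := by
  simpa [tanh_eq_sinh_div_cosh] using (hasDerivAt_cosh x).log (cosh_pos x).ne'

theorem tanh_nonneg {x : ℝ} (hx : 0 ≤ x) : 0 ≤ tanh x := by
  rw [tanh_eq_sinh_div_cosh]
  exact div_nonneg (sinh_nonneg_iff.mpr hx) (cosh_pos x).le

theorem tanh_le_self {x : ℝ} (hx : 0 ≤ x) : tanh x ≤ x :=
  image_le_of_hasDerivAt_le (b := x) hasDerivAt_tanh hasDerivAt_id' (by simp)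
    (fun y _ ↦ by nlinarith [sq_nonneg (tanh y)]) x ⟨hx, le_rfl⟩

theorem sub_pow_three_div_three_le_tanh {x : ℝ} (hx : 0 ≤ x) : x - x ^ 3 / 3 ≤ tanh x := by
  refine image_le_of_hasDerivAt_le (b := x) (f := fun y ↦ y - y ^ 3 / 3)
    (f' := fun y ↦ 1 - y ^ 2) (fun y ↦ ?_) hasDerivAt_tanh (by simp) (fun y hy ↦ ?_)
    x ⟨hx, le_rfl⟩
  · exact ((hasDerivAt_id' y).sub ((hasDerivAt_pow 3 y).div_const 3)).congr_deriv (by ring)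
  · have := tanh_le_self hy.1
    have := tanh_nonneg hy.1
    nlinarith

theorem tanh_le_of_le_one {x : ℝ} (hx₀ : 0 ≤ x) (hx₁ : x ≤ 1) :
    tanh x ≤ x - x ^ 3 / 3 + 2 * x ^ 5 / 15 := by
  refine image_le_of_hasDerivAt_le (b := 1) hasDerivAt_tanh
    (g := fun y ↦ y - y ^ 3 / 3 + 2 * y ^ 5 / 15) (g' := fun y ↦ 1 - y ^ 2 + 2 * y ^ 4 / 3)
    (fun y ↦ ?_) (by simp) (fun y hy ↦ ?_) x ⟨hx₀, hx₁⟩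
  · exact (((hasDerivAt_id' y).sub ((hasDerivAt_pow 3 y).div_const 3)).add
      (((hasDerivAt_pow 5 y).const_mul 2).div_const 15)).congr_deriv (by ring)
  · have h₁ := sub_pow_three_div_three_le_tanh hy.1
    have h₂ : 0 ≤ y - y ^ 3 / 3 := by nlinarith [hy.2, hy.1, mul_nonneg hy.1 hy.1]
    nlinarith [mul_le_mul h₁ h₁ h₂ (h₂.trans h₁), pow_nonneg hy.1 6]

theorem sq_div_two_sub_le_log_cosh (x : ℝ) : x ^ 2 / 2 - x ^ 4 / 12 ≤ log (cosh x) := by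
  suffices h : ∀ y, 0 ≤ y → y ^ 2 / 2 - y ^ 4 / 12 ≤ log (cosh y) by
    simpa [cosh_abs, Even.pow_abs (n := 4) ⟨2, rfl⟩] using h |x| (abs_nonneg x)
  intro y hy
  refine image_le_of_hasDerivAt_le (b := y) (f := fun z ↦ z ^ 2 / 2 - z ^ 4 / 12)
    (f' := fun z ↦ z - z ^ 3 / 3) (fun z ↦ ?_) hasDerivAt_log_cosh (by simp) (fun z hz ↦ ?_)
    y ⟨hy, le_rfl⟩
  · exact (((hasDerivAt_pow 2 z).div_const 2).sub ((hasDerivAt_pow 4 z).div_const 12)).congr_deriv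
      (by ring)
  · exact sub_pow_three_div_three_le_tanh hz.1

theorem log_cosh_le_of_abs_le_one {x : ℝ} (hx : |x| ≤ 1) :
    log (cosh x) ≤ x ^ 2 / 2 - x ^ 4 / 12 + x ^ 6 / 45 := by
  suffices h : ∀ y ∈ Icc (0 : ℝ) 1, log (cosh y) ≤ y ^ 2 / 2 - y ^ 4 / 12 + y ^ 6 / 45 by
    simpa [cosh_abs, Even.pow_abs (n := 4) ⟨2, rfl⟩, Even.pow_abs (n := 6) ⟨3, rfl⟩] using
      h |x| ⟨abs_nonneg x, hx⟩
  refine image_le_of_hasDerivAt_le hasDerivAt_log_cosh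
    (g' := fun z ↦ z - z ^ 3 / 3 + 2 * z ^ 5 / 15) (fun z ↦ ?_) (by simp) (fun z hz ↦ ?_)
  · exact ((((hasDerivAt_pow 2 z).div_const 2).sub ((hasDerivAt_pow 4 z).div_const 12)).add
      ((hasDerivAt_pow 6 z).div_const 45)).congr_deriv (by ring)
  · exact tanh_le_of_le_one hz.1 hz.2.le

theorem log_cosh_sub_sq_le_of_one_le_abs {x : ℝ} (hx : 1 ≤ |x|) :
    log (cosh x) - x ^ 2 / 2 ≤ -x ^ 2 / 40 := by
  -- past `1`, `log cosh` grows with slope `tanh < 1`, starting from `log (cosh 1) ≤ 79 / 180`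
  suffices h : log (cosh |x|) ≤ |x| - 11 / 20 by
    rw [cosh_abs] at h
    nlinarith [sq_abs x, sq_nonneg (|x| - 20 / 19)]
  refine image_le_of_hasDerivAt_le (a := 1) (b := |x|) hasDerivAt_log_cosh
    (fun z ↦ (hasDerivAt_id' z).sub_const (11 / 20)) ?_ (fun z _ ↦ (tanh_lt_one z).le)
    |x| ⟨hx, le_rfl⟩
  have := log_cosh_le_of_abs_le_one (x := 1) (by simp)
  norm_num at this ⊢
  linarith

end Real

/-- `Wndensity n w` unfolds to `curieWeissWeight n w / ∫ u, curieWeissWeight n u`. -/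
noncomputable def curieWeissWeight (n : ℕ) (w : ℝ) : ℝ :=
  exp (-(√n / 2) * w ^ 2 + n * log (cosh ((n : ℝ) ^ (-(1 : ℝ) / 4) * w)))

noncomputable def quarticWeight (w : ℝ) : ℝ := exp (-w ^ 4 / 12)

theorem rpow_neg_one_div_four_sq {x : ℝ} (hx : 0 ≤ x) :
    (x ^ (-(1 : ℝ) / 4)) ^ 2 = (√x)⁻¹ := by
  rw [← rpow_natCast, ← rpow_mul hx, sqrt_eq_rpow, ← rpow_neg hx]
  norm_num

theorem curieWeissWeight_eq {n : ℕ} (hn : 0 < n) (w : ℝ) :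
    curieWeissWeight n w = exp (n * (log (cosh ((n : ℝ) ^ (-(1 : ℝ) / 4) * w)) -
      ((n : ℝ) ^ (-(1 : ℝ) / 4) * w) ^ 2 / 2)) := by
  rw [curieWeissWeight, mul_pow, rpow_neg_one_div_four_sq (Nat.cast_nonneg n)]
  congr 1
  field_simp
  linear_combination (-w ^ 2) * mul_self_sqrt (Nat.cast_nonneg n)

theorem rescale_sq_mul_sqrt {n : ℕ} (hn : 0 < n) (w : ℝ) :
    ((n : ℝ) ^ (-(1 : ℝ) / 4) * w) ^ 2 * √n = w ^ 2 := by
  rw [mul_pow, rpow_neg_one_div_four_sq (Nat.cast_nonneg n)]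
  field_simp

theorem rescale_pow_four_mul {n : ℕ} (hn : 0 < n) (w : ℝ) :
    (n : ℝ) * ((n : ℝ) ^ (-(1 : ℝ) / 4) * w) ^ 4 = w ^ 4 := by
  have h := rescale_sq_mul_sqrt hn w
  generalize (n : ℝ) ^ (-(1 : ℝ) / 4) * w = t at h
  rw [show w ^ 4 = (w ^ 2) ^ 2 by ring, ← h, mul_pow, sq_sqrt (Nat.cast_nonneg n)]
  ring

theorem quarticWeight_le_curieWeissWeight {n : ℕ} (hn : 0 < n) (w : ℝ) :
    quarticWeight w ≤ curieWeissWeight n w := by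
  rw [curieWeissWeight_eq hn, quarticWeight, exp_le_exp]
  have ht4 := rescale_pow_four_mul hn w
  generalize (n : ℝ) ^ (-(1 : ℝ) / 4) * w = t at *
  have h := mul_le_mul_of_nonneg_left (sq_div_two_sub_le_log_cosh t) (Nat.cast_nonneg n)
  linarith

theorem curieWeissWeight_le {n : ℕ} (hn : 0 < n) (w : ℝ) :
    curieWeissWeight n w ≤ exp (1 - w ^ 2 / 40) := by
  rw [curieWeissWeight_eq hn, exp_le_exp]
  have hs : 1 ≤ √(n : ℝ) := one_le_sqrt.mpr (by exact_mod_cast hn)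
  have hn0 : (0 : ℝ) ≤ n := Nat.cast_nonneg n
  have ht2 := rescale_sq_mul_sqrt hn w
  have ht4 := rescale_pow_four_mul hn w
  generalize (n : ℝ) ^ (-(1 : ℝ) / 4) * w = t at *
  rcases le_total |t| 1 with ht | ht
  · have hdecay : log (cosh t) - t ^ 2 / 2 ≤ -t ^ 4 / 20 := by
      have := log_cosh_le_of_abs_le_one ht
      have : t ^ 2 ≤ 1 := by nlinarith [sq_abs t, abs_nonneg t]
      nlinarith [pow_nonneg (sq_nonneg t) 2]
    nlinarith [mul_le_mul_of_nonneg_left hdecay hn0, sq_nonneg (w ^ 2 - 1 / 4)]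
  · have hdecay := mul_le_mul_of_nonneg_left (log_cosh_sub_sq_le_of_one_le_abs ht) hn0
    have : (n : ℝ) * t ^ 2 = √n * w ^ 2 := by
      rw [← ht2]
      nth_rw 1 [← sq_sqrt hn0]
      ring
    nlinarith [sq_nonneg w]

theorem curieWeissWeight_le_quarticWeight_mul_exp {n : ℕ} (hn : 0 < n) {w : ℝ}
    (hw : |(n : ℝ) ^ (-(1 : ℝ) / 4) * w| ≤ 1) :
    curieWeissWeight n w ≤ quarticWeight w * exp (w ^ 6 / √n) := by
  have hn0 : (0 : ℝ) ≤ n := Nat.cast_nonneg n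
  have ht2 := rescale_sq_mul_sqrt hn w
  have ht4 := rescale_pow_four_mul hn w
  rw [curieWeissWeight_eq hn, quarticWeight, ← exp_add, exp_le_exp]
  generalize (n : ℝ) ^ (-(1 : ℝ) / 4) * w = t at *
  have ht6 : (n : ℝ) * t ^ 6 = w ^ 6 / √n := by
    rw [eq_div_iff (by positivity), show w ^ 6 = (w ^ 2) ^ 3 by ring, ← ht2]
    nth_rw 1 [← sq_sqrt hn0]
    ring
  have := mul_le_mul_of_nonneg_left (log_cosh_le_of_abs_le_one hw) hn0
  have : 0 ≤ (n : ℝ) * t ^ 6 := by positivity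
  linarith

theorem curieWeissWeight_sub_quarticWeight_le {n : ℕ} (hn : 0 < n) (w : ℝ) :
    curieWeissWeight n w - quarticWeight w ≤ (1 + w ^ 6) * exp (1 - w ^ 2 / 40) / √n := by
  have hs : 0 < √(n : ℝ) := by positivity
  have hW := curieWeissWeight_le hn w
  have hW0 : 0 ≤ curieWeissWeight n w := (exp_pos _).le
  have hw6 : 0 ≤ w ^ 6 := by positivity
  rw [le_div_iff₀ hs]
  rcases le_total |(n : ℝ) ^ (-(1 : ℝ) / 4) * w| 1 with ht | ht
  · have hq : curieWeissWeight n w * exp (-(w ^ 6 / √n)) ≤ quarticWeight w := by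
      rw [exp_neg, ← div_eq_mul_inv, div_le_iff₀ (exp_pos _)]
      exact curieWeissWeight_le_quarticWeight_mul_exp hn ht
    calc (curieWeissWeight n w - quarticWeight w) * √n
        ≤ curieWeissWeight n w * (1 - exp (-(w ^ 6 / √n))) * √n := by gcongr; linarith
      _ ≤ curieWeissWeight n w * (w ^ 6 / √n) * √n := by
        gcongr
        linarith [add_one_le_exp (-(w ^ 6 / √n))]
      _ = curieWeissWeight n w * w ^ 6 := by field_simp
      _ ≤ (1 + w ^ 6) * exp (1 - w ^ 2 / 40) := by
        nlinarith [mul_le_mul_of_nonneg_right hW hw6, exp_pos (1 - w ^ 2 / 40)]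
  · have hw : √n ≤ w ^ 2 := by
      rw [← rescale_sq_mul_sqrt hn w]
      exact le_mul_of_one_le_left hs.le ((one_le_sq_iff_one_le_abs _).mpr ht)
    have hq : 0 ≤ quarticWeight w := (exp_pos _).le
    calc (curieWeissWeight n w - quarticWeight w) * √n ≤ curieWeissWeight n w * w ^ 2 := by
          nlinarith [mul_le_mul_of_nonneg_left hw hW0]
      _ ≤ exp (1 - w ^ 2 / 40) * (1 + w ^ 6) :=
          mul_le_mul hW (by nlinarith [sq_nonneg (w ^ 2 - 1), sq_nonneg w]) (sq_nonneg w)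
            (exp_pos _).le
      _ = (1 + w ^ 6) * exp (1 - w ^ 2 / 40) := mul_comm _ _

theorem integrable_pow_mul_exp_neg_mul_sq (k : ℕ) {b : ℝ} (hb : 0 < b) :
    Integrable fun x : ℝ ↦ x ^ k * exp (-b * x ^ 2) := by
  simpa [rpow_natCast] using
    integrable_rpow_mul_exp_neg_mul_sq hb (s := k) (by linarith [k.cast_nonneg (α := ℝ)])

theorem integrable_one_add_pow_six_mul_exp :
    Integrable fun w : ℝ ↦ (1 + w ^ 6) * exp (1 - w ^ 2 / 40) := by
  have h := ((integrable_pow_mul_exp_neg_mul_sq 0 (b := 1 / 40) (by norm_num)).add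
    (integrable_pow_mul_exp_neg_mul_sq 6 (b := 1 / 40) (by norm_num))).const_mul (exp 1)
  refine h.congr (ae_of_all _ fun w ↦ ?_)
  simp only [Pi.add_apply, pow_zero, one_mul]
  rw [sub_eq_add_neg, exp_add]
  ring_nf

theorem continuous_curieWeissWeight (n : ℕ) : Continuous (curieWeissWeight n) :=
  continuous_exp.comp <| (continuous_const.mul (continuous_pow 2)).add <| continuous_const.mul <|
    (continuous_cosh.comp (continuous_const.mul continuous_id)).log fun _ ↦ (cosh_pos _).ne'

theorem integrable_curieWeissWeight {n : ℕ} (hn : 0 < n) : Integrable (curieWeissWeight n) := by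
  refine integrable_one_add_pow_six_mul_exp.mono'
    (continuous_curieWeissWeight n).aestronglyMeasurable (ae_of_all _ fun w ↦ ?_)
  rw [norm_of_nonneg (show 0 ≤ curieWeissWeight n w from (exp_pos _).le)]
  exact (curieWeissWeight_le hn w).trans
    (le_mul_of_one_le_left (exp_pos _).le (by linarith [pow_nonneg (sq_nonneg w) 3]))

theorem integrable_quarticWeight : Integrable quarticWeight :=
  (integrable_curieWeissWeight one_pos).mono' (by unfold quarticWeight; fun_prop)
    (ae_of_all _ fun w ↦ by
      rw [norm_of_nonneg (show 0 ≤ quarticWeight w from (exp_pos _).le)]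
      exact quarticWeight_le_curieWeissWeight one_pos w)

theorem integral_curieWeissWeight_sub_le {n : ℕ} (hn : 0 < n) :
    (∫ w, curieWeissWeight n w) - ∫ w, quarticWeight w ≤
      (∫ w, (1 + w ^ 6) * exp (1 - w ^ 2 / 40)) / √n := by
  rw [← integral_sub (integrable_curieWeissWeight hn) integrable_quarticWeight, ← integral_div]
  exact integral_mono ((integrable_curieWeissWeight hn).sub integrable_quarticWeight)
    (integrable_one_add_pow_six_mul_exp.div_const _) (curieWeissWeight_sub_quarticWeight_le hn)

theorem integral_quarticWeight :
    ∫ w, quarticWeight w = 3 ^ ((1 : ℝ) / 4) * Gamma (1 / 4) / √2 := by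
  have hhalf : ∫ x in Ioi (0 : ℝ), exp (-(1 / 12) * x ^ (4 : ℝ)) =
      (1 / 12) ^ (-1 / (4 : ℝ)) * Gamma (1 / 4 + 1) :=
    integral_exp_neg_mul_rpow (by norm_num) (by norm_num)
  have h12 : ((1 : ℝ) / 12) ^ (-1 / (4 : ℝ)) = √2 * 3 ^ ((1 : ℝ) / 4) := by
    rw [one_div, inv_rpow (by norm_num), ← rpow_neg (by norm_num), sqrt_eq_rpow,
      show (12 : ℝ) = 2 ^ (2 : ℝ) * 3 by norm_num, mul_rpow (by positivity) (by norm_num),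
      ← rpow_mul (by norm_num)]
    norm_num
  calc ∫ w, quarticWeight w = ∫ w, exp (-(1 / 12) * |w| ^ (4 : ℝ)) := by
        congr 1 with w
        rw [quarticWeight, show (4 : ℝ) = (4 : ℕ) by norm_num, rpow_natCast,
          Even.pow_abs ⟨2, rfl⟩]
        ring_nf
    _ = 2 * ((1 / 12) ^ (-1 / (4 : ℝ)) * Gamma (1 / 4 + 1)) := by
        rw [integral_comp_abs (f := fun x ↦ exp (-(1 / 12) * x ^ (4 : ℝ))), hhalf]
    _ = 3 ^ ((1 : ℝ) / 4) * Gamma (1 / 4) / √2 := by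
        rw [h12, Gamma_add_one (by norm_num)]
        field_simp
        rw [sq_sqrt (by norm_num)]
        ring

theorem quarticDensity_eq (w : ℝ) :
    quarticDensity w = quarticWeight w / ∫ u, quarticWeight u := by
  rw [integral_quarticWeight, quarticDensity, quarticWeight]
  field_simp

theorem abs_div_sub_div_le {a b A B : ℝ} (ha : 0 ≤ a) (hab : a ≤ b) (haA : a ≤ A)
    (hgap : b - a ≤ B - A) (hA : 0 < A) : |b / B - a / A| ≤ (B - A) / A := by
  have hAB : A ≤ B := by linarith
  have hbB : b ≤ B := by linarith
  have hB : 0 < B := hA.trans_le hAB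
  rw [abs_sub_le_iff]
  constructor
  · calc b / B - a / A ≤ b / A - a / A := by gcongr; linarith
      _ = (b - a) / A := by ring
      _ ≤ (B - A) / A := by gcongr
  · calc a / A - b / B ≤ b / A - b / B := by gcongr
      _ = b / B * ((B - A) / A) := by field_simp
      _ ≤ (B - A) / A := mul_le_of_le_one_left (div_nonneg (sub_nonneg.2 hAB) hA.le)
          ((div_le_one hB).2 hbB)

theorem toReal_withDensity_ofReal_apply {α : Type*} [MeasurableSpace α] {μ : Measure α}
    {f : α → ℝ} (hf : Integrable f μ) (hf0 : 0 ≤ f) {s : Set α} (hs : MeasurableSet s) :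
    ((μ.withDensity fun x ↦ ENNReal.ofReal (f x)) s).toReal = ∫ x in s, f x ∂μ := by
  rw [withDensity_apply _ hs, ← ofReal_integral_eq_lintegral_ofReal hf.integrableOn
    (ae_of_all _ hf0), ENNReal.toReal_ofReal (setIntegral_nonneg hs fun x _ ↦ hf0 x)]

theorem abs_withDensity_normalized_sub_le {α : Type*} [MeasurableSpace α] {μ : Measure α}
    {f g : α → ℝ} (hf : Integrable f μ) (hg : Integrable g μ) (hf0 : 0 ≤ f) (hfg : f ≤ g)
    (hpos : 0 < ∫ x, f x ∂μ) {s : Set α} (hs : MeasurableSet s) :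
    |((μ.withDensity fun x ↦ ENNReal.ofReal (g x / ∫ y, g y ∂μ)) s).toReal -
        ((μ.withDensity fun x ↦ ENNReal.ofReal (f x / ∫ y, f y ∂μ)) s).toReal| ≤
      ((∫ x, g x ∂μ) - ∫ x, f x ∂μ) / ∫ x, f x ∂μ := by
  have hg0 : 0 ≤ g := hf0.trans hfg
  have hZg : 0 ≤ ∫ x, g x ∂μ := integral_nonneg hg0
  rw [toReal_withDensity_ofReal_apply (hg.div_const _) (fun x ↦ div_nonneg (hg0 x) hZg) hs,
    toReal_withDensity_ofReal_apply (hf.div_const _) (fun x ↦ div_nonneg (hf0 x) hpos.le) hs,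
    integral_div, integral_div]
  refine abs_div_sub_div_le (setIntegral_nonneg hs fun x _ ↦ hf0 x)
    (setIntegral_mono hf.integrableOn hg.integrableOn hfg)
    (setIntegral_le_integral hf (ae_of_all _ hf0)) ?_ hpos
  rw [← integral_sub hg.integrableOn hf.integrableOn, ← integral_sub hg hf]
  exact setIntegral_le_integral (hg.sub hf) (ae_of_all _ fun x ↦ sub_nonneg.mpr (hfg x))

/-- Total variation approximation of the rescaled critical latent variable `𝖶_n` by the
quartic limit law `𝖶`, with rate `C (log n)³ n^{-1/2}` (uniformly over Borel sets). -/
theorem stmt17 :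
    ∃ C > 0, ∀ n : ℕ, 2 ≤ n → ∀ s : Set ℝ, MeasurableSet s →
      |((volume.withDensity fun w => ENNReal.ofReal (Wndensity n w)) s).toReal -
          (quarticMeasure s).toReal| ≤ C * (Real.log n) ^ 3 / Real.sqrt n := by
  set Z := ∫ w, quarticWeight w
  set K := ∫ w : ℝ, (1 + w ^ 6) * exp (1 - w ^ 2 / 40)
  have hZ : 0 < Z := integral_exp_pos integrable_quarticWeight
  have hK : 0 < K := by
    rw [integral_pos_iff_support_of_nonneg (fun w ↦ by positivity)
      integrable_one_add_pow_six_mul_exp, Function.support_eq_univ fun w ↦ by positivity]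
    simp
  have hlog2 : 0 < log 2 := log_pos one_lt_two
  refine ⟨K / (Z * log 2 ^ 3), by positivity, fun n hn s hs ↦ ?_⟩
  have hn0 : 0 < n := by omega
  have hlog : log 2 ≤ log n := log_le_log two_pos (by exact_mod_cast hn)
  have hmeas :
      quarticMeasure = volume.withDensity fun w ↦ ENNReal.ofReal (quarticWeight w / Z) := by
    simp only [quarticMeasure, quarticDensity_eq, Z]
  rw [hmeas]
  calc _ ≤ ((∫ w, curieWeissWeight n w) - Z) / Z :=
        abs_withDensity_normalized_sub_le integrable_quarticWeight (integrable_curieWeissWeight hn0)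
          (fun w ↦ (exp_pos _).le) (quarticWeight_le_curieWeissWeight hn0) hZ hs
    _ ≤ K / √n / Z := by gcongr; exact integral_curieWeissWeight_sub_le hn0
    _ = K / (Z * log 2 ^ 3) * log 2 ^ 3 / √n := by field_simp
    _ ≤ K / (Z * log 2 ^ 3) * log n ^ 3 / √n := by gcongr
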